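/- arXiv:0909.4564 — 2 statements merged into one kernel-verified Lean document; each statement's English description precedes it below -/
import Mathlib

section
/- Let w be a C² solution of the reduced equation D_r[(c₂² - g(w))w_r + c₁c₂ w_s] + D_s[c₁c₂ w_r + (c₁² - f(w))w_s] = 0 of the self-similar form w(r,s) = v(s/r) for r > 0, where v is C². Then for all n = s/r, the quantity v'(n)·(−c₂²n² + 2c₁c₂ n + n²g(v(n)) − c₁² + f(v(n))) is constant in n. -/
/-- Partial derivative of a two-variable function w.r.t. its first variable `r`. -/
noncomputable def pr (w : ℝ → ℝ → ℝ) (r s : ℝ) : ℝ := deriv (fun ρ => w ρ s) r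
/-- Partial derivative of a two-variable function w.r.t. its second variable `s`. -/
noncomputable def ps (w : ℝ → ℝ → ℝ) (r s : ℝ) : ℝ := deriv (fun σ => w r σ) s

/-!
For `w(r,s) = v(s/r)` both components of the conserved flux are homogeneous of degree `-1`:
`Tʳ(r,s) = A(s/r)/r` and `Tˢ(r,s) = B(s/r)/r` with `A = fluxR`, `B = fluxS`. At `r = 1` the
conservation law `D_r Tʳ + D_s Tˢ = 0` becomes `B' = A + n A' = (n A)'`, so `n A(n) - B(n)` is
constant, and expanding `n A - B` gives exactly the quantity of the theorem.
-/

open Filter Topology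

lemma hasDerivAt_const_div (s : ℝ) {r : ℝ} (hr : r ≠ 0) :
    HasDerivAt (fun ρ => s / ρ) (-(s / r ^ 2)) r := by
  simpa [div_eq_mul_inv] using (hasDerivAt_inv hr).const_mul s

lemma hasDerivAt_comp_div_div {F : ℝ → ℝ} {r : ℝ} (s : ℝ) (hF : DifferentiableAt ℝ F (s / r))
    (hr : r ≠ 0) :
    HasDerivAt (fun ρ => F (s / ρ) / ρ) (-(F (s / r) + s / r * deriv F (s / r)) / r ^ 2) r := by
  refine ((hF.hasDerivAt.comp r (hasDerivAt_const_div s hr)).div (hasDerivAt_id r) hr).congr_deriv ?_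
  simp only [Function.comp_apply, id]
  field_simp
  ring

lemma sub_const_of_add_mul_deriv_eq_deriv {A B : ℝ → ℝ} (hA : Differentiable ℝ A)
    (hB : Differentiable ℝ B) (h : ∀ n, A n + n * deriv A n = deriv B n) (n₁ n₂ : ℝ) :
    n₁ * A n₁ - B n₁ = n₂ * A n₂ - B n₂ := by
  refine is_const_of_deriv_eq_zero (f := fun m => m * A m - B m) (by fun_prop) (fun n => ?_) n₁ n₂
  have hderiv : HasDerivAt (fun m => m * A m - B m) (1 * A n + n * deriv A n - deriv B n) n :=
    ((hasDerivAt_id' n).mul (hA n).hasDerivAt).sub (hB n).hasDerivAt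
  rw [hderiv.deriv, one_mul, h, sub_self]

section SelfSimilar

variable {v : ℝ → ℝ} {r : ℝ} (s : ℝ)

lemma pr_comp_div (hv : DifferentiableAt ℝ v (s / r)) (hr : r ≠ 0) :
    pr (fun r s => v (s / r)) r s = -(s / r ^ 2) * deriv v (s / r) := by
  rw [pr, mul_comm]
  exact (hv.hasDerivAt.comp r (hasDerivAt_const_div s hr)).deriv

lemma ps_comp_div (hv : DifferentiableAt ℝ v (s / r)) :
    ps (fun r s => v (s / r)) r s = deriv v (s / r) / r := by
  rw [ps, div_eq_mul_one_div]
  exact (hv.hasDerivAt.comp s ((hasDerivAt_id s).div_const r)).deriv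

end SelfSimilar

section Fluxes

variable (c₁ c₂ : ℝ) (f g v : ℝ → ℝ)

noncomputable def fluxR (n : ℝ) : ℝ := deriv v n * (c₁ * c₂ - (c₂ ^ 2 - g (v n)) * n)

noncomputable def fluxS (n : ℝ) : ℝ := deriv v n * (c₁ ^ 2 - f (v n) - c₁ * c₂ * n)

variable {c₁ c₂ f g v}

lemma differentiable_fluxR (hv : ContDiff ℝ 2 v) (hg : Differentiable ℝ g) :
    Differentiable ℝ (fluxR c₁ c₂ g v) := by
  have := hv.differentiable two_ne_zero
  have := hv.differentiable_deriv_two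
  unfold fluxR
  fun_prop

lemma differentiable_fluxS (hv : ContDiff ℝ 2 v) (hf : Differentiable ℝ f) :
    Differentiable ℝ (fluxS c₁ c₂ f v) := by
  have := hv.differentiable two_ne_zero
  have := hv.differentiable_deriv_two
  unfold fluxS
  fun_prop

variable {r : ℝ} (s : ℝ)

lemma fluxR_comp_div (hv : DifferentiableAt ℝ v (s / r)) (hr : r ≠ 0) :
    (c₂ ^ 2 - g (v (s / r))) * pr (fun r s => v (s / r)) r s
        + c₁ * c₂ * ps (fun r s => v (s / r)) r s = fluxR c₁ c₂ g v (s / r) / r := by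
  rw [pr_comp_div s hv hr, ps_comp_div s hv, fluxR]
  field_simp
  ring

lemma fluxS_comp_div (hv : DifferentiableAt ℝ v (s / r)) (hr : r ≠ 0) :
    c₁ * c₂ * pr (fun r s => v (s / r)) r s
        + (c₁ ^ 2 - f (v (s / r))) * ps (fun r s => v (s / r)) r s
      = fluxS c₁ c₂ f v (s / r) / r := by
  rw [pr_comp_div s hv hr, ps_comp_div s hv, fluxS]
  field_simp
  ring

lemma deriv_fluxR_comp_div (hv : ContDiff ℝ 2 v) (hg : Differentiable ℝ g) (hr : r ≠ 0) :
    deriv (fun ρ => (c₂ ^ 2 - g (v (s / ρ))) * pr (fun r s => v (s / r)) ρ s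
        + c₁ * c₂ * ps (fun r s => v (s / r)) ρ s) r
      = -(fluxR c₁ c₂ g v (s / r) + s / r * deriv (fluxR c₁ c₂ g v) (s / r)) / r ^ 2 := by
  have hflux : (fun ρ => (c₂ ^ 2 - g (v (s / ρ))) * pr (fun r s => v (s / r)) ρ s
      + c₁ * c₂ * ps (fun r s => v (s / r)) ρ s) =ᶠ[𝓝 r] fun ρ => fluxR c₁ c₂ g v (s / ρ) / ρ := by
    filter_upwards [eventually_ne_nhds hr] with ρ hρ
    exact fluxR_comp_div s (hv.differentiable two_ne_zero _) hρ
  rw [hflux.deriv_eq]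
  exact (hasDerivAt_comp_div_div s (differentiable_fluxR hv hg _) hr).deriv

lemma deriv_fluxS_comp_div (hv : ContDiff ℝ 2 v) (hf : Differentiable ℝ f) (hr : r ≠ 0) :
    deriv (fun σ => c₁ * c₂ * pr (fun r s => v (s / r)) r σ
        + (c₁ ^ 2 - f (v (σ / r))) * ps (fun r s => v (s / r)) r σ) s
      = deriv (fluxS c₁ c₂ f v) (s / r) / r ^ 2 := by
  have hflux : (fun σ => c₁ * c₂ * pr (fun r s => v (s / r)) r σ
      + (c₁ ^ 2 - f (v (σ / r))) * ps (fun r s => v (s / r)) r σ)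
        = fun σ => fluxS c₁ c₂ f v (σ / r) / r :=
    funext fun σ => fluxS_comp_div σ (hv.differentiable two_ne_zero _) hr
  rw [hflux]
  refine (((differentiable_fluxS hv hf _).hasDerivAt.comp s
    ((hasDerivAt_id s).div_const r)).div_const r).deriv.trans ?_
  simp only [id]
  field_simp

end Fluxes

/-- if `w(r,s) = v(s/r)` solves the reduced conservation law for `r > 0`,
then `v'(n)·(-c₂² n² + 2 c₁ c₂ n + n² g(v) - c₁² + f(v))` is constant in `n`. -/
theorem stmt_11 (f g : ℝ → ℝ) (c₁ c₂ : ℝ) (v : ℝ → ℝ)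
    (hv : ContDiff ℝ 2 v) (hf : ContDiff ℝ 1 f) (hg : ContDiff ℝ 1 g)
    (w : ℝ → ℝ → ℝ) (hw : ∀ r s, w r s = v (s / r))
    (hsol : ∀ r s, 0 < r →
      deriv (fun ρ => (c₂ ^ 2 - g (w ρ s)) * pr w ρ s + c₁ * c₂ * ps w ρ s) r
        + deriv (fun σ => c₁ * c₂ * pr w r σ + (c₁ ^ 2 - f (w r σ)) * ps w r σ) s = 0) :
    ∀ n₁ n₂ : ℝ,
      deriv v n₁ * (-c₂ ^ 2 * n₁ ^ 2 + 2 * c₁ * c₂ * n₁ + n₁ ^ 2 * g (v n₁) - c₁ ^ 2 + f (v n₁))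
        = deriv v n₂ *
            (-c₂ ^ 2 * n₂ ^ 2 + 2 * c₁ * c₂ * n₂ + n₂ ^ 2 * g (v n₂) - c₁ ^ 2 + f (v n₂)) := by
  obtain rfl : w = fun r s => v (s / r) := funext₂ hw
  have hfd := hf.differentiable one_ne_zero
  have hgd := hg.differentiable one_ne_zero
  have hreduced : ∀ n, fluxR c₁ c₂ g v n + n * deriv (fluxR c₁ c₂ g v) n
      = deriv (fluxS c₁ c₂ f v) n := fun n => by
    have hdiv := hsol 1 n one_pos
    rw [deriv_fluxR_comp_div n hv hgd one_ne_zero, deriv_fluxS_comp_div n hv hfd one_ne_zero] at hdiv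
    simp only [div_one, one_pow] at hdiv
    linarith
  have hquantity : ∀ n, deriv v n * (-c₂ ^ 2 * n ^ 2 + 2 * c₁ * c₂ * n + n ^ 2 * g (v n) - c₁ ^ 2
      + f (v n)) = n * fluxR c₁ c₂ g v n - fluxS c₁ c₂ f v n := fun n => by
    rw [fluxR, fluxS]
    ring
  intro n₁ n₂
  rw [hquantity, hquantity]
  exact sub_const_of_add_mul_deriv_eq_deriv (differentiable_fluxR hv hgd)
    (differentiable_fluxS hv hfd) hreduced n₁ n₂
end

section
/- Let u(t,x,y) = v((x - c₁t)/(y - c₂t)) where v is a C² function of one variable satisfying v'(n)·(−c₂²n² + 2c₁c₂ n + n²·g(v(n)) − c₁² + f(v(n))) = C for some constant C on an interval. Then u satisfies u_tt − (f(u)u_x)_x − (g(u)u_y)_y = 0 on the open set where y − c₂t ≠ 0 (and v' exists and the first-order relation can be differentiated). -/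
/-!
Write `n = (x - c₁ t)/η` with `η = y - c₂ t`. By the chain rule the three fluxes `u_t`,
`f(u) u_x`, `g(u) u_y` are `A(n)/η`, `B(n)/η`, `G(n)/η` for one-variable functions
`A = v'·(c₂ n - c₁)`, `B = f(v)·v'`, `G = -n·g(v)·v'`. Differentiating once more, the wave
operator becomes `(A·(c₂ n - c₁) - B + n·G)'(n) / η²`, and `A·(c₂ n - c₁) - B + n·G = -v'·Q`
is minus the left-hand side of the reduced ODE, a constant.
-/

/-- Partial derivative with respect to the first variable. -/
noncomputable def pt (u : ℝ → ℝ → ℝ → ℝ) (t x y : ℝ) : ℝ := deriv (fun τ => u τ x y) t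
/-- Partial derivative with respect to the second variable. -/
noncomputable def px (u : ℝ → ℝ → ℝ → ℝ) (t x y : ℝ) : ℝ := deriv (fun ξ => u t ξ y) x
/-- Partial derivative with respect to the third variable. -/
noncomputable def py (u : ℝ → ℝ → ℝ → ℝ) (t x y : ℝ) : ℝ := deriv (fun η => u t x η) y

/-- The similarity variable `n` of the reduction. -/
noncomputable def simVar (c₁ c₂ t x y : ℝ) : ℝ := (x - c₁ * t) / (y - c₂ * t)

section SimVar

variable {c₁ c₂ t x y : ℝ}

theorem hasDerivAt_simVar_t (hη : y - c₂ * t ≠ 0) :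
    HasDerivAt (fun τ => simVar c₁ c₂ τ x y)
      ((c₂ * simVar c₁ c₂ t x y - c₁) / (y - c₂ * t)) t := by
  refine (((hasDerivAt_const_mul c₁).const_sub x).div
    ((hasDerivAt_const_mul c₂).const_sub y) hη).congr_deriv ?_
  rw [simVar]
  field_simp
  ring

theorem hasDerivAt_simVar_x :
    HasDerivAt (fun ξ => simVar c₁ c₂ t ξ y) (1 / (y - c₂ * t)) x :=
  ((hasDerivAt_id x).sub_const (c₁ * t)).div_const (y - c₂ * t)

theorem hasDerivAt_simVar_y (hη : y - c₂ * t ≠ 0) :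
    HasDerivAt (fun η => simVar c₁ c₂ t x η) (-simVar c₁ c₂ t x y / (y - c₂ * t)) y := by
  refine ((hasDerivAt_const y (x - c₁ * t)).div
    ((hasDerivAt_id' y).sub_const (c₂ * t)) hη).congr_deriv ?_
  rw [simVar]
  field_simp
  ring

end SimVar

section Flux

variable {c₁ c₂ t x y : ℝ} {F : ℝ → ℝ} {F' : ℝ}

theorem hasDerivAt_comp_simVar_div_t (hF : HasDerivAt F F' (simVar c₁ c₂ t x y))
    (hη : y - c₂ * t ≠ 0) :
    HasDerivAt (fun τ => F (simVar c₁ c₂ τ x y) / (y - c₂ * τ))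
      ((F' * (c₂ * simVar c₁ c₂ t x y - c₁) + F (simVar c₁ c₂ t x y) * c₂) / (y - c₂ * t) ^ 2)
      t := by
  refine ((hF.comp t (hasDerivAt_simVar_t hη)).div
    ((hasDerivAt_const_mul c₂).const_sub y) hη).congr_deriv ?_
  rw [Function.comp_apply]
  field_simp
  ring

theorem hasDerivAt_comp_simVar_div_x (hF : HasDerivAt F F' (simVar c₁ c₂ t x y)) :
    HasDerivAt (fun ξ => F (simVar c₁ c₂ t ξ y) / (y - c₂ * t)) (F' / (y - c₂ * t) ^ 2) x := by
  refine ((hF.comp x hasDerivAt_simVar_x).div_const (y - c₂ * t)).congr_deriv ?_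
  rw [mul_one_div, div_div, sq]

theorem hasDerivAt_comp_simVar_div_y (hF : HasDerivAt F F' (simVar c₁ c₂ t x y))
    (hη : y - c₂ * t ≠ 0) :
    HasDerivAt (fun η => F (simVar c₁ c₂ t x η) / (η - c₂ * t))
      (-(simVar c₁ c₂ t x y * F' + F (simVar c₁ c₂ t x y)) / (y - c₂ * t) ^ 2) y := by
  refine ((hF.comp y (hasDerivAt_simVar_y hη)).div
    ((hasDerivAt_id' y).sub_const (c₂ * t)) hη).congr_deriv ?_
  rw [Function.comp_apply]
  field_simp
  ring

end Flux

section Partials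

variable {c₁ c₂ t x y : ℝ} {v : ℝ → ℝ} {u : ℝ → ℝ → ℝ → ℝ}

theorem pt_comp_simVar (hu : ∀ t x y, u t x y = v (simVar c₁ c₂ t x y))
    (hv : DifferentiableAt ℝ v (simVar c₁ c₂ t x y)) (hη : y - c₂ * t ≠ 0) :
    pt u t x y =
      deriv v (simVar c₁ c₂ t x y) * (c₂ * simVar c₁ c₂ t x y - c₁) / (y - c₂ * t) := by
  rw [pt, funext fun τ => hu τ x y, mul_div_assoc]
  exact (hv.hasDerivAt.comp t (hasDerivAt_simVar_t hη)).deriv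

theorem px_comp_simVar (hu : ∀ t x y, u t x y = v (simVar c₁ c₂ t x y))
    (hv : DifferentiableAt ℝ v (simVar c₁ c₂ t x y)) :
    px u t x y = deriv v (simVar c₁ c₂ t x y) / (y - c₂ * t) := by
  rw [px, funext fun ξ => hu t ξ y, ← mul_one_div]
  exact (hv.hasDerivAt.comp x hasDerivAt_simVar_x).deriv

theorem py_comp_simVar (hu : ∀ t x y, u t x y = v (simVar c₁ c₂ t x y))
    (hv : DifferentiableAt ℝ v (simVar c₁ c₂ t x y)) (hη : y - c₂ * t ≠ 0) :
    py u t x y =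
      -(simVar c₁ c₂ t x y * deriv v (simVar c₁ c₂ t x y)) / (y - c₂ * t) := by
  rw [py, funext fun η => hu t x η]
  exact (hv.hasDerivAt.comp y (hasDerivAt_simVar_y hη)).deriv.trans (by ring)

end Partials

/-- The derivative of the constant `B - A·(c₂ n - c₁) - n·G = v'·Q`. -/
theorem flux_derivs_cancel {v f g : ℝ → ℝ} {c₁ c₂ C : ℝ}
    (hODE : ∀ m : ℝ,
      deriv v m * (-c₂ ^ 2 * m ^ 2 + 2 * c₁ * c₂ * m + m ^ 2 * g (v m) - c₁ ^ 2 + f (v m)) = C)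
    {n : ℝ} (hA : DifferentiableAt ℝ (fun m => deriv v m * (c₂ * m - c₁)) n)
    (hB : DifferentiableAt ℝ (fun m => f (v m) * deriv v m) n)
    (hG : DifferentiableAt ℝ (fun m => -(m * g (v m) * deriv v m)) n) :
    deriv (fun m => deriv v m * (c₂ * m - c₁)) n * (c₂ * n - c₁)
        + deriv v n * (c₂ * n - c₁) * c₂
        - deriv (fun m => f (v m) * deriv v m) n
        + (n * deriv (fun m => -(m * g (v m) * deriv v m)) n + -(n * g (v n) * deriv v n)) = 0 := by
  have hP := (hB.hasDerivAt.sub (hA.hasDerivAt.mul ((hasDerivAt_const_mul c₂).sub_const c₁))).sub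
    ((hasDerivAt_id' n).mul hG.hasDerivAt)
  have hP₀ : HasDerivAt (fun m => f (v m) * deriv v m - deriv v m * (c₂ * m - c₁) * (c₂ * m - c₁)
      - m * -(m * g (v m) * deriv v m)) 0 n :=
    (hasDerivAt_const n C).congr_of_eventuallyEq (.of_forall fun m => by rw [← hODE m]; ring)
  linarith [hP.unique hP₀]

/-- if `v` solves the first-order reduced ODE
`v'(n)·(-c₂² n² + 2 c₁ c₂ n + n² g(v) - c₁² + f(v)) = C`, then
`u(t,x,y) = v((x - c₁ t)/(y - c₂ t))` solves `u_tt - (f(u)u_x)_x - (g(u)u_y)_y = 0`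
wherever `y - c₂ t ≠ 0`. -/
theorem stmt_12 (f g : ℝ → ℝ) (c₁ c₂ C : ℝ) (v : ℝ → ℝ)
    (hv : ContDiff ℝ 2 v) (hf : ContDiff ℝ 1 f) (hg : ContDiff ℝ 1 g)
    (hODE : ∀ n : ℝ,
      deriv v n * (-c₂ ^ 2 * n ^ 2 + 2 * c₁ * c₂ * n + n ^ 2 * g (v n) - c₁ ^ 2 + f (v n)) = C)
    (u : ℝ → ℝ → ℝ → ℝ)
    (hu : ∀ t x y, u t x y = v ((x - c₁ * t) / (y - c₂ * t))) :
    ∀ t x y, y - c₂ * t ≠ 0 →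
      deriv (fun τ => pt u τ x y) t
        - deriv (fun ξ => f (u t ξ y) * px u t ξ y) x
        - deriv (fun η => g (u t x η) * py u t x η) y = 0 := by
  intro t x y hη
  replace hu : ∀ t x y, u t x y = v (simVar c₁ c₂ t x y) := hu
  have hv₁ : Differentiable ℝ v := hv.differentiable two_ne_zero
  have hv₂ : Differentiable ℝ (deriv v) := hv.differentiable_deriv_two
  have hf₁ : Differentiable ℝ f := hf.differentiable one_ne_zero
  have hg₁ : Differentiable ℝ g := hg.differentiable one_ne_zero
  set n := simVar c₁ c₂ t x y
  have hA : DifferentiableAt ℝ (fun m => deriv v m * (c₂ * m - c₁)) n := by fun_prop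
  have hB : DifferentiableAt ℝ (fun m => f (v m) * deriv v m) n := by fun_prop
  have hG : DifferentiableAt ℝ (fun m => -(m * g (v m) * deriv v m)) n := by fun_prop
  have hT : HasDerivAt (fun τ => pt u τ x y) _ t :=
    (hasDerivAt_comp_simVar_div_t hA.hasDerivAt hη).congr_of_eventuallyEq <| by
      filter_upwards [((hasDerivAt_const_mul c₂).const_sub y).continuousAt.eventually_ne hη]
        with τ hτ
      exact pt_comp_simVar hu (hv₁ _) hτ
  have hX : HasDerivAt (fun ξ => f (u t ξ y) * px u t ξ y) _ x :=
    (hasDerivAt_comp_simVar_div_x hB.hasDerivAt).congr_of_eventuallyEq <|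
      .of_forall fun ξ => by dsimp only; rw [hu, px_comp_simVar hu (hv₁ _), mul_div_assoc]
  have hY : HasDerivAt (fun η => g (u t x η) * py u t x η) _ y :=
    (hasDerivAt_comp_simVar_div_y hG.hasDerivAt hη).congr_of_eventuallyEq <| by
      filter_upwards [((hasDerivAt_id' y).sub_const (c₂ * t)).continuousAt.eventually_ne hη]
        with η hη'
      rw [hu, py_comp_simVar hu (hv₁ _) hη']
      ring
  rw [hT.deriv, hX.deriv, hY.deriv]
  linear_combination flux_derivs_cancel hODE hA hB hG / (y - c₂ * t) ^ 2
end
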